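/- arXiv:2312.13024 — 2 statements merged into one kernel-verified Lean document; each statement's English description precedes it below -/
import Mathlib

section
/- Let V be a type with an extensional Type-valued relation ∈ (meaning the canonical map (x = y) → ∏ z, (z ∈ x) ≃ (z ∈ y) is an equivalence). For any type A, the type of internalisable representations Σ (f : A → V), Σ (a : V), ∏ (z : V), (z ∈ a) ≃ (Σ x : A, f x = z) is equivalent to the type of internalisations Σ (a : V), (Σ (z : V), z ∈ a) ≃ A. -/
/-!
After swapping `f` and `a`, it suffices to fix `a`. A fibrewise equivalence between `(· ∈ a)` and
the fibres of `f` sums to `El a ≃ Σ z, fib f z ≃ A`; conversely an equivalence `e : El a ≃ A`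
determines `f = Sigma.fst ∘ e.symm`, and `e` restricts to an equivalence of each `z ∈ a` with
the fibre of `f` over `z`.
-/

def sigmaSigmaComm {α β : Type*} (γ : α → β → Type*) :
    (Σ a, Σ b, γ a b) ≃ (Σ b, Σ a, γ a b) where
  toFun p := ⟨p.2.1, p.1, p.2.2⟩
  invFun p := ⟨p.2.1, p.1, p.2.2⟩

theorem cast_snd_eq_of_sigma_eq {V : Type*} {P : V → Type*} {p : Σ z, P z} {z : V} {m : P z}
    (hp : p = ⟨z, m⟩) (h : p.1 = z) : h ▸ p.2 = m := by
  subst hp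
  rfl

def fiberEquivOfSigmaEquiv {V A : Type*} {P : V → Type*} (e : (Σ z, P z) ≃ A) (z : V) :
    P z ≃ {x : A // (e.symm x).1 = z} where
  toFun m := ⟨e ⟨z, m⟩, by rw [Equiv.symm_apply_apply]⟩
  invFun x := x.2 ▸ (e.symm x.1).2
  left_inv m := cast_snd_eq_of_sigma_eq (e.symm_apply_apply _) _
  right_inv := by
    rintro ⟨x, rfl⟩
    simp

def fiberwiseEquivEquivSigmaEquiv {V : Type*} (P : V → Type*) (A : Type*) :
    (Σ f : A → V, ∀ z, P z ≃ {x : A // f x = z}) ≃ ((Σ z, P z) ≃ A) where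
  toFun p := (Equiv.sigmaCongrRight p.2).trans (Equiv.sigmaFiberEquiv p.1)
  invFun e := ⟨fun x => (e.symm x).1, fiberEquivOfSigmaEquiv e⟩
  left_inv := by
    rintro ⟨f, e⟩
    refine Sigma.ext rfl (heq_of_eq ?_)
    funext z
    ext m
    rfl
  right_inv e := by
    ext ⟨z, m⟩
    rfl

theorem internalisable_representations_equiv_internalisations_general
    {V : Type*} (mem : V → V → Type*)
    (A : Type*) :
    Nonempty ((Σ f : A → V, Σ a : V, ∀ z : V, mem z a ≃ {x : A // f x = z}) ≃
      (Σ a : V, (Σ z : V, mem z a) ≃ A)) :=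
  ⟨(sigmaSigmaComm _).trans
    (Equiv.sigmaCongrRight fun a => fiberwiseEquivEquivSigmaEquiv (mem · a) A)⟩

theorem internalisable_representations_equiv_internalisations
    {V : Type*} (mem : V → V → Type*)
    (ext : ∀ x y : V,
      Function.Bijective
        (fun h : x = y => fun z : V => Equiv.cast (congrArg (mem z) h)))
    (A : Type*) :
    Nonempty ((Σ f : A → V, Σ a : V, ∀ z : V, mem z a ≃ {x : A // f x = z}) ≃
      (Σ a : V, (Σ z : V, mem z a) ≃ A)) :=
  internalisable_representations_equiv_internalisations_general mem A
end

section
/- Let A be a type, B : A → Type a family, and φ, ψ : ∏ (a : A), B a. Then the identity type φ = ψ is equivalent to the type Σ (e : A ≃ A), ∏ (a : A), (⟨a, φ a⟩ : Σ a, B a) = ⟨e a, ψ (e a)⟩. -/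
/-! The first components of the graph equalities force `e a = a` for every `a`, so `e = id`, and
then the second components give `φ a = ψ a`. So both sides are subsingletons with maps in each
direction, hence equivalent. -/

theorem Sigma.graph_eq_graph_comp_iff {A : Type*} {B : A → Type*} {φ ψ : ∀ a, B a} {f : A → A} :
    (∀ a, (⟨a, φ a⟩ : Σ a, B a) = ⟨f a, ψ (f a)⟩) ↔ f = id ∧ φ = ψ := by
  constructor
  · intro h
    have hf : f = id := funext fun a => (congrArg Sigma.fst (h a)).symm
    subst hf
    exact ⟨rfl, funext fun a => sigma_mk_injective (h a)⟩
  · rintro ⟨rfl, rfl⟩ _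
    rfl

instance Sigma.subsingleton_perm_graph_eq {A : Type*} {B : A → Type*} (φ ψ : ∀ a, B a) :
    Subsingleton ((e : A ≃ A) ×' ∀ a, (⟨a, φ a⟩ : Σ a, B a) = ⟨e a, ψ (e a)⟩) := by
  refine ⟨fun ⟨e, he⟩ ⟨e', he'⟩ => ?_⟩
  have : e = e' := DFunLike.coe_injective <|
    (graph_eq_graph_comp_iff.1 he).1.trans (graph_eq_graph_comp_iff.1 he').1.symm
  subst this
  rfl

theorem funext_equiv_graph_equalities
    {A : Type*} {B : A → Type*} (φ ψ : ∀ a : A, B a) :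
    Nonempty ((φ = ψ) ≃
      ((e : A ≃ A) ×' ∀ a : A, (⟨a, φ a⟩ : Σ a : A, B a) = ⟨e a, ψ (e a)⟩)) :=
  ⟨equivOfSubsingletonOfSubsingleton
    (fun h => ⟨Equiv.refl A, Sigma.graph_eq_graph_comp_iff.2 ⟨rfl, h⟩⟩)
    (fun p => (Sigma.graph_eq_graph_comp_iff.1 p.2).2)⟩
end
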